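/- arXiv:2510.04993 — 2 statements merged into one kernel-verified Lean document; each statement's English description precedes it below -/
import Mathlib

section
/- Let π be a permutation gate in 𝒞₃ that is in staircase form, and let the descending multiplication on 𝔽₂ⁿ be defined by eᵢeⱼ := π(eᵢ+eⱼ) + eᵢ + eⱼ extended bilinearly. Then for every S ⊆ [n], π(∑_{i∈S} eᵢ) = ∑_{∅≠T⊆S} ∏_{i∈T} eᵢ; that is, the permutation associated to the induced descending multiplication is the original π. -/
/-- Vectors in `𝔽₂ⁿ`, indexing computational basis states. -/
abbrev QV (n : ℕ) := Fin n → ZMod 2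

/-- `n`-qubit gates: `2ⁿ × 2ⁿ` complex matrices indexed by `𝔽₂ⁿ`. -/
abbrev QMat (n : ℕ) := Matrix (QV n) (QV n) ℂ

/-- Standard basis vector `eᵢ` of `𝔽₂ⁿ`. -/
def stdBasis (n : ℕ) (i : Fin n) : QV n := fun m => if m = i then 1 else 0

/-- The gate `X^u Z^z`, sending `|b⟩` to `(-1)^(z·b) |b+u⟩`. -/
noncomputable def XZGate (n : ℕ) (u z : QV n) : QMat n :=
  fun a b => if a = b + u then (-1 : ℂ) ^ (∑ i, (z i).val * (b i).val) else 0

/-- The Pauli group on `n` qubits: gates `c·P₁⊗⋯⊗Pₙ`, `c ∈ {±1, ±i}`,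
`Pᵢ ∈ {I,X,Y,Z}`, equivalently phases times `X^u Z^z`. -/
def PauliGroup (n : ℕ) : Set (QMat n) :=
  { P | ∃ (c : ℂ) (u z : QV n),
      (c = 1 ∨ c = -1 ∨ c = Complex.I ∨ c = -Complex.I) ∧ P = c • XZGate n u z }

/-- Level `k` of the Clifford hierarchy `𝒞ₖ` (level 1 is the Pauli group,
level 2 the Clifford group; level 0 is junk/empty). -/
def CliffordLevel (n : ℕ) : ℕ → Set (QMat n)
  | 0 => ∅
  | 1 => PauliGroup n
  | (k+2) => { U | U ∈ Matrix.unitaryGroup (QV n) ℂ ∧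
      ∀ P ∈ PauliGroup n, U * P * star U ∈ CliffordLevel n (k+1) }

/-- The permutation gate of a permutation `f` of `𝔽₂ⁿ`: sends `|v⟩` to `|f v⟩`. -/
noncomputable def permGate (n : ℕ) (f : QV n ≃ QV n) : QMat n :=
  fun a b => if a = f b then 1 else 0

/-- A diagonal gate. -/
def IsDiagonal (n : ℕ) (d : QMat n) : Prop := ∀ a b : QV n, a ≠ b → d a b = 0

/-- A gate is semi-Clifford if it equals `φ₁ d φ₂` for Clifford `φ₁, φ₂` and diagonal `d`. -/
def IsSemiClifford (n : ℕ) (U : QMat n) : Prop :=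
  ∃ φ₁ d φ₂ : QMat n, φ₁ ∈ CliffordLevel n 2 ∧ φ₂ ∈ CliffordLevel n 2 ∧
    IsDiagonal n d ∧ U = φ₁ * d * φ₂

/-- The underlying map of the Toffoli gate `TOF_{i,j,k}`: `v ↦ v + (vᵢvⱼ)·eₖ`. -/
def tofFun (n : ℕ) (i j k : Fin n) (v : QV n) : QV n :=
  fun m => if m = k then v m + v i * v j else v m

/-- A map on `𝔽₂ⁿ` is in staircase form if it is a product (applied left-to-right)
of pairwise distinct Toffoli gates `TOF_{i,j,k}` with `i<j<k` and with targets
nondecreasing in the order the gates are applied. -/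
def IsStaircase (n : ℕ) (g : QV n → QV n) : Prop :=
  ∃ L : List (Fin n × Fin n × Fin n),
    L.Nodup ∧
    (∀ t ∈ L, t.1 < t.2.1 ∧ t.2.1 < t.2.2) ∧
    List.Chain' (fun s t => s.2.2 ≤ t.2.2) L ∧
    g = fun v => L.foldl (fun w t => tofFun n t.1 t.2.1 t.2.2 w) v

/-- A descending multiplication on `𝔽₂ⁿ`: bilinear, associative, commutative,
`eᵢeᵢ = 0`, and for `i < j`, `eᵢeⱼ ∈ span{eₖ : k > j}`. -/
def IsDescendingMul (n : ℕ) (mul : QV n → QV n → QV n) : Prop :=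
  (∀ u v w : QV n, mul (u + v) w = mul u w + mul v w) ∧
  (∀ u v w : QV n, mul u (v + w) = mul u v + mul u w) ∧
  (∀ u v w : QV n, mul (mul u v) w = mul u (mul v w)) ∧
  (∀ u v : QV n, mul u v = mul v u) ∧
  (∀ i : Fin n, mul (stdBasis n i) (stdBasis n i) = 0) ∧
  (∀ i j : Fin n, i < j → ∀ m : Fin n, m ≤ j → mul (stdBasis n i) (stdBasis n j) m = 0)

/-- The product `∏_{i ∈ l} eᵢ` under a multiplication, for a list `l` (junk `0` on `[]`). -/
def dmProdList (n : ℕ) (mul : QV n → QV n → QV n) : List (Fin n) → QV n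
  | [] => 0
  | [i] => stdBasis n i
  | i :: j :: rest => mul (stdBasis n i) (dmProdList n mul (j :: rest))

/-- The product `∏_{i ∈ T} eᵢ` under a multiplication. -/
def dmProd (n : ℕ) (mul : QV n → QV n → QV n) (T : Finset (Fin n)) : QV n :=
  dmProdList n mul (T.sort (· ≤ ·))

/-- `g` is the map `∑_{i∈S} eᵢ ↦ ∑_{∅≠T⊆S} ∏_{i∈T} eᵢ` associated to a multiplication. -/
def dmPiSpec (n : ℕ) (mul : QV n → QV n → QV n) (g : QV n → QV n) : Prop :=
  ∀ S : Finset (Fin n),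
    g (∑ i ∈ S, stdBasis n i) = ∑ T ∈ S.powerset.erase ∅, dmProd n mul T

/-- The bilinear extension of `eᵢeⱼ := g(eᵢ+eⱼ) + eᵢ + eⱼ`. -/
def inducedMul (n : ℕ) (g : QV n → QV n) (u v : QV n) : QV n :=
  ∑ i : Fin n, ∑ j : Fin n,
    (u i * v j) • (g (stdBasis n i + stdBasis n j) + stdBasis n i + stdBasis n j)

/-- Coefficient of the monomial `∏_{i∈T} aᵢ` in the unique multilinear polynomial
over `𝔽₂` representing `g : 𝔽₂ⁿ → 𝔽₂` (Möbius inversion over `𝔽₂`). -/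
def mlCoeff (n : ℕ) (g : QV n → ZMod 2) (T : Finset (Fin n)) : ZMod 2 :=
  ∑ R ∈ T.powerset, g (∑ i ∈ R, stdBasis n i)

/-- Strictly lower triangular matrix. -/
def StrictLowerTri (n : ℕ) (A : Matrix (Fin n) (Fin n) (ZMod 2)) : Prop :=
  ∀ p q : Fin n, p ≤ q → A p q = 0

/-- Multiplication of basis vectors for the gate `U_k`: the basis of `𝔽₂^(2^k-1)` is
indexed by nonempty subsets `S ⊆ [k]`, encoded as indices `a` via the binary digits of
`a+1`; `e_S e_T = e_{S∪T}` if `S ∩ T = ∅` and `e_S e_T = 0` otherwise. -/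
def ukBasisMul (k : ℕ) (a b : Fin (2 ^ k - 1)) : QV (2 ^ k - 1) :=
  if (a.val + 1) &&& (b.val + 1) = 0 then
    (if h : a.val + b.val + 1 < 2 ^ k - 1 then stdBasis (2 ^ k - 1) ⟨a.val + b.val + 1, h⟩
     else 0)
  else 0

/-- The descending multiplication defining `U_k`, extended bilinearly. -/
def ukMul (k : ℕ) (u v : QV (2 ^ k - 1)) : QV (2 ^ k - 1) :=
  ∑ a : Fin (2 ^ k - 1), ∑ b : Fin (2 ^ k - 1), (u a * v b) • ukBasisMul k a b

/-! Conjugating the translation `X^u` by a permutation gate `π ∈ 𝒞₃` gives a Clifford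
permutation, and a Clifford permutation conjugates every translation to a translation, so it
is affine. Hence, when `π` fixes `0` and each `eᵢ`, the map `v ↦ π(π⁻¹ v + eᵢ) + v + eᵢ` is
additive; it agrees with `eᵢ · _` on the basis, so `eᵢ · π(w) = π(w + eᵢ) + π(w) + eᵢ`.
Adding the smallest element of `S` last, this identity expands `π(∑_{i∈S} eᵢ)` into the sum
of the products `∏_{i∈T} eᵢ`, `∅ ≠ T ⊆ S`. A staircase circuit fixes `0` and every `eᵢ`
because none of its Toffoli gates fires on them. -/

open Finset

section PermGate

variable {n : ℕ}

lemma permGate_mul_permGate (f g : QV n ≃ QV n) :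
    permGate n f * permGate n g = permGate n (g.trans f) := by
  ext a b
  simp only [Matrix.mul_apply, permGate, Equiv.trans_apply, ite_mul, one_mul, zero_mul]
  rw [sum_eq_single (g b) (fun j _ hj => by simp [hj]) (by simp), if_pos rfl]
  congr

lemma star_permGate (f : QV n ≃ QV n) : star (permGate n f) = permGate n f.symm := by
  ext a b
  by_cases h : b = f a <;> simp [permGate, h, Equiv.eq_symm_apply, Ne.symm]

lemma permGate_mul_permGate_mul_star (g h : QV n ≃ QV n) :
    permGate n g * permGate n h * star (permGate n g) = permGate n (g.permCongr h) := by
  rw [star_permGate, permGate_mul_permGate, permGate_mul_permGate]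
  rfl

lemma permGate_addRight_mem_pauliGroup (u : QV n) :
    permGate n (Equiv.addRight u) ∈ PauliGroup n := by
  refine ⟨1, u, 0, Or.inl rfl, ?_⟩
  ext a b
  simp only [permGate, Equiv.coe_addRight, Matrix.smul_apply, XZGate, Pi.zero_apply,
    ZMod.val_zero, zero_mul, sum_const_zero, pow_zero, smul_eq_mul, mul_ite, mul_one, mul_zero]
  congr

lemma apply_eq_add_of_permGate_mem_pauliGroup {h : QV n ≃ QV n}
    (hh : permGate n h ∈ PauliGroup n) (v : QV n) : h v = v + h 0 := by
  obtain ⟨c, u, z, -, hcuz⟩ := hh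
  have htrans : ∀ v, h v = v + u := fun v => by
    by_contra hne
    simpa [permGate, XZGate, hne] using congrFun (congrFun hcuz (h v)) v
  rw [htrans v, htrans 0, zero_add]

lemma permGate_permCongr_addRight_mem_cliffordLevel {k : ℕ} {g : QV n ≃ QV n}
    (hg : permGate n g ∈ CliffordLevel n (k + 2)) (u : QV n) :
    permGate n (g.permCongr (Equiv.addRight u)) ∈ CliffordLevel n (k + 1) := by
  rw [← permGate_mul_permGate_mul_star]
  exact hg.2 _ (permGate_addRight_mem_pauliGroup u)

lemma map_add_of_permGate_mem_cliffordLevel_two {g : QV n ≃ QV n}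
    (hg : permGate n g ∈ CliffordLevel n 2) (x y : QV n) :
    g (x + y) = g x + g y + g 0 := by
  have htrans (v : QV n) : g (g.symm v + y) = v + g (g.symm 0 + y) :=
    apply_eq_add_of_permGate_mem_pauliGroup
      (permGate_permCongr_addRight_mem_cliffordLevel (k := 0) hg y) v
  have hx := htrans (g x)
  have h0 := htrans (g 0)
  rw [Equiv.symm_apply_apply] at hx h0
  rw [zero_add] at h0
  rw [hx, h0, add_right_comm, ZModModule.add_add_add_cancel]

lemma map_add_of_permGate_mem_cliffordLevel_three {f : QV n ≃ QV n}
    (hf : permGate n f ∈ CliffordLevel n 3) (u x y : QV n) :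
    f (f.symm (x + y) + u) = f (f.symm x + u) + f (f.symm y + u) + f (f.symm 0 + u) :=
  map_add_of_permGate_mem_cliffordLevel_two
    (permGate_permCongr_addRight_mem_cliffordLevel hf u) x y

end PermGate

section Staircase

variable {n : ℕ}

lemma tofFun_eq_self {i j k : Fin n} {v : QV n} (hv : v i * v j = 0) :
    tofFun n i j k v = v := by
  funext m
  simp [tofFun, hv]

lemma foldl_tofFun_eq_self {v : QV n} {L : List (Fin n × Fin n × Fin n)}
    (hv : ∀ t ∈ L, v t.1 * v t.2.1 = 0) :
    L.foldl (fun w t => tofFun n t.1 t.2.1 t.2.2 w) v = v := by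
  induction L with
  | nil => rfl
  | cons t L ih =>
    rw [List.foldl_cons, tofFun_eq_self (hv t List.mem_cons_self)]
    exact ih fun s hs => hv s (List.mem_cons_of_mem _ hs)

lemma IsStaircase.map_zero {g : QV n → QV n} (hg : IsStaircase n g) : g 0 = 0 := by
  obtain ⟨L, -, -, -, rfl⟩ := hg
  exact foldl_tofFun_eq_self fun _ _ => by simp

lemma IsStaircase.map_stdBasis {g : QV n → QV n} (hg : IsStaircase n g) (i : Fin n) :
    g (stdBasis n i) = stdBasis n i := by
  obtain ⟨L, -, hlt, -, rfl⟩ := hg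
  refine foldl_tofFun_eq_self fun t ht => ?_
  have hne : t.1 ≠ t.2.1 := (hlt t ht).1.ne
  by_cases h : t.1 = i
  · simp [stdBasis, h ▸ hne.symm]
  · simp [stdBasis, h]

end Staircase

section InducedMul

variable {n : ℕ}

lemma sum_smul_stdBasis (v : QV n) : ∑ j, v j • stdBasis n j = v := by
  funext m
  simp [stdBasis, Finset.sum_apply]

lemma inducedMul_add_right (g : QV n → QV n) (u v w : QV n) :
    inducedMul n g u (v + w) = inducedMul n g u v + inducedMul n g u w := by
  simp only [inducedMul, Pi.add_apply, mul_add, add_smul, sum_add_distrib]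

lemma inducedMul_stdBasis_left (g : QV n → QV n) (i : Fin n) (v : QV n) :
    inducedMul n g (stdBasis n i) v =
      ∑ j, v j • (g (stdBasis n i + stdBasis n j) + stdBasis n i + stdBasis n j) := by
  rw [inducedMul, sum_eq_single i (fun a _ ha => by simp [stdBasis, ha]) (by simp)]
  simp [stdBasis]

lemma inducedMul_stdBasis_left_eq {f : QV n ≃ QV n} (hf : permGate n f ∈ CliffordLevel n 3)
    (h0 : f 0 = 0) (hbasis : ∀ j, f (stdBasis n j) = stdBasis n j) (i : Fin n) (v : QV n) :
    inducedMul n f (stdBasis n i) v = f (f.symm v + stdBasis n i) + v + stdBasis n i := by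
  have hsymm0 : f.symm 0 = 0 := f.symm_apply_eq.2 h0.symm
  let M : QV n →+ QV n :=
    AddMonoidHom.mk' (fun x => f (f.symm x + stdBasis n i) + x + stdBasis n i) fun x y => by
      simp only [map_add_of_permGate_mem_cliffordLevel_three hf, hsymm0, zero_add, hbasis]
      abel
  have hM (j : Fin n) : M (stdBasis n j) =
      f (stdBasis n i + stdBasis n j) + stdBasis n i + stdBasis n j := by
    simp only [M, AddMonoidHom.mk'_apply, f.symm_apply_eq.2 (hbasis j).symm]
    rw [add_comm (stdBasis n j)]
    abel
  calc inducedMul n f (stdBasis n i) v = ∑ j, v j • M (stdBasis n j) := by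
        simp only [inducedMul_stdBasis_left, hM]
    _ = M.toZModLinearMap 2 (∑ j, v j • stdBasis n j) := by simp
    _ = _ := by rw [sum_smul_stdBasis]; rfl

end InducedMul

section DescendingProduct

variable {n : ℕ} {mul : QV n → QV n → QV n}

lemma dmProd_empty : dmProd n mul ∅ = 0 := by
  rw [dmProd, sort_empty]
  rfl

lemma dmProd_singleton (i : Fin n) : dmProd n mul {i} = stdBasis n i := by
  rw [dmProd, sort_singleton]
  rfl

lemma dmProd_insert_of_forall_lt {i : Fin n} {T : Finset (Fin n)} (hT : T.Nonempty)
    (hlt : ∀ j ∈ T, i < j) : dmProd n mul (insert i T) = mul (stdBasis n i) (dmProd n mul T) := by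
  have hiT : i ∉ T := fun hi => (hlt i hi).false
  rw [dmProd, sort_insert _ (fun j hj => (hlt j hj).le) hiT, dmProd]
  have hsort_ne : T.sort (· ≤ ·) ≠ [] := by
    rw [← List.length_pos_iff, length_sort]
    exact hT.card_pos
  obtain ⟨j, rest, hsort⟩ := List.exists_cons_of_ne_nil hsort_ne
  rw [hsort]
  rfl

lemma sum_powerset_dmProd_insert_of_forall_lt
    (hadd : ∀ u v w, mul u (v + w) = mul u v + mul u w) {i : Fin n} {s : Finset (Fin n)}
    (hlt : ∀ j ∈ s, i < j) :
    ∑ T ∈ s.powerset, dmProd n mul (insert i T) =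
      stdBasis n i + mul (stdBasis n i) (∑ T ∈ s.powerset, dmProd n mul T) := by
  let L : QV n →+ QV n := AddMonoidHom.mk' (mul (stdBasis n i)) (hadd _)
  have hL : mul (stdBasis n i) (∑ T ∈ s.powerset, dmProd n mul T) =
      ∑ T ∈ s.powerset.erase ∅, mul (stdBasis n i) (dmProd n mul T) := by
    rw [sum_erase _ (by rw [dmProd_empty]; exact L.map_zero)]
    exact map_sum L _ _
  rw [hL, ← add_sum_erase _ _ (empty_mem_powerset s), insert_empty_eq, dmProd_singleton]
  congr 1
  refine sum_congr rfl fun T hT => ?_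
  obtain ⟨hTne, hTs⟩ := mem_erase.1 hT
  exact dmProd_insert_of_forall_lt (nonempty_iff_ne_empty.2 hTne)
    fun j hj => hlt j (mem_powerset.1 hTs hj)

theorem dmPiSpec_of_stdBasis_mul (hadd : ∀ u v w, mul u (v + w) = mul u v + mul u w)
    {g : QV n → QV n} (h0 : g 0 = 0)
    (hstep : ∀ i w, mul (stdBasis n i) (g w) = g (w + stdBasis n i) + g w + stdBasis n i) :
    dmPiSpec n mul g := by
  intro S
  rw [sum_erase _ dmProd_empty]
  induction S using Finset.induction_on_min with
  | empty => simp [h0, dmProd_empty]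
  | insert i s hlt ih =>
    have his : i ∉ s := fun hi => (hlt i hi).false
    set X := ∑ j ∈ s, stdBasis n j
    rw [sum_insert his, sum_powerset_insert his, sum_powerset_dmProd_insert_of_forall_lt hadd hlt,
      ← ih, hstep, add_comm (stdBasis n i)]
    calc g (X + stdBasis n i)
        = g (X + stdBasis n i) + (g X + g X) + (stdBasis n i + stdBasis n i) := by
          simp only [ZModModule.add_self, add_zero]
      _ = _ := by abel

end DescendingProduct

theorem stmt4_general (n : ℕ) (f : QV n ≃ QV n)
    (hf : permGate n f ∈ CliffordLevel n 3) (hst : IsStaircase n ⇑f) :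
    dmPiSpec n (inducedMul n ⇑f) ⇑f :=
  dmPiSpec_of_stdBasis_mul (inducedMul_add_right f) hst.map_zero fun i w => by
    simpa using inducedMul_stdBasis_left_eq hf hst.map_zero hst.map_stdBasis i (f w)

/-- permutation → multiplication → permutation is the identity: for a
staircase-form `𝒞₃` permutation gate `π`, the permutation associated to the induced
descending multiplication is `π` itself. -/
theorem stmt4 (n : ℕ) (hn : 1 ≤ n) (f : QV n ≃ QV n)
    (hf : permGate n f ∈ CliffordLevel n 3) (hst : IsStaircase n ⇑f) :
    dmPiSpec n (inducedMul n ⇑f) ⇑f :=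
  stmt4_general n f hf hst
end

section
/- For any k ≥ 1, if U is a semi-Clifford gate with U ∈ 𝒞ₖ, then U⁻¹ ∈ 𝒞ₖ. -/
/-! For `k ≥ 2` write `U = φ₁ d φ₂`. Each level `𝒞ₖ` with `k ≥ 2` is stable under multiplication
by Clifford gates on either side, so `d = φ₁† U φ₂†` lies in `𝒞ₖ`, and then so does
`U⁻¹ = U† = φ₂† d† φ₁†` once `d†` does. As `d` is diagonal, `d†` is the entrywise complex
conjugate of `d`; entrywise conjugation preserves every level since it is a ring automorphism
commuting with `†` that maps the Pauli group onto itself. For `k = 1` the claim is closure of the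
Pauli group under `†`. -/

open Matrix ComplexConjugate

section Pauli

variable {n : ℕ}

lemma neg_one_pow_dot_add (z b u : QV n) :
    (-1 : ℂ) ^ (∑ i, (z i).val * ((b + u) i).val)
      = (-1) ^ (∑ i, (z i).val * (b i).val) * (-1) ^ (∑ i, (z i).val * (u i).val) := by
  rw [← pow_add]
  refine neg_one_pow_congr ?_
  simp only [← ZMod.natCast_eq_zero_iff_even]
  push_cast
  simp [mul_add, Finset.sum_add_distrib]

lemma QV.eq_add_comm {a b u : QV n} : a = b + u ↔ b = a + u := by
  constructor <;> rintro rfl <;> ext i <;> simp [add_assoc, CharTwo.add_self_eq_zero]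

lemma star_XZGate_mul_self (u z : QV n) : star (XZGate n u z) * XZGate n u z = 1 := by
  ext a c
  simp only [mul_apply, star_apply, XZGate, mul_ite, mul_zero, Finset.sum_ite_eq',
    Finset.mem_univ, if_true, add_left_inj]
  rcases eq_or_ne a c with rfl | h
  · simp [← pow_add, ← two_mul]
  · simp [h, h.symm]

lemma star_XZGate (u z : QV n) :
    star (XZGate n u z) = (-1 : ℂ) ^ (∑ i, (z i).val * (u i).val) • XZGate n u z := by
  ext a b
  simp only [star_apply, XZGate, Matrix.smul_apply, smul_eq_mul, mul_ite, mul_zero]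
  by_cases h : a = b + u
  · rw [if_pos (QV.eq_add_comm.mp h), if_pos h, h, neg_one_pow_dot_add, mul_comm]
    simp
  · simp [h, mt QV.eq_add_comm.mpr h]

lemma PauliGroup.mem_unitaryGroup {P : QMat n} (hP : P ∈ PauliGroup n) :
    P ∈ unitaryGroup (QV n) ℂ := by
  obtain ⟨c, u, z, hc, rfl⟩ := hP
  rw [mem_unitaryGroup_iff', star_smul, smul_mul_smul_comm, star_XZGate_mul_self]
  rcases hc with rfl | rfl | rfl | rfl <;> simp

lemma PauliGroup.star_mem {P : QMat n} (hP : P ∈ PauliGroup n) : star P ∈ PauliGroup n := by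
  obtain ⟨c, u, z, hc, rfl⟩ := hP
  refine ⟨star c * (-1) ^ (∑ i, (z i).val * (u i).val), u, z, ?_,
    by rw [star_smul, star_XZGate, smul_smul]⟩
  rcases neg_one_pow_eq_or ℂ (∑ i, (z i).val * (u i).val) with h | h <;> rw [h] <;>
    rcases hc with rfl | rfl | rfl | rfl <;> simp

lemma PauliGroup.finite : (PauliGroup n).Finite := by
  refine ((Set.toFinite {1, -1, Complex.I, -Complex.I}).prod (Set.finite_univ (α := QV n × QV n))
    |>.image fun p : ℂ × QV n × QV n => p.1 • XZGate n p.2.1 p.2.2).subset ?_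
  rintro _ ⟨c, u, z, hc, rfl⟩
  exact ⟨(c, u, z), ⟨hc, trivial⟩, rfl⟩

lemma XZGate_map_conj (u z : QV n) : (XZGate n u z).map conj = XZGate n u z := by
  ext a b
  simp only [map_apply, XZGate]
  split_ifs <;> simp

lemma PauliGroup.map_conj_mem {P : QMat n} (hP : P ∈ PauliGroup n) :
    P.map conj ∈ PauliGroup n := by
  obtain ⟨c, u, z, hc, rfl⟩ := hP
  refine ⟨conj c, u, z, ?_, by rw [map_smul' _ _ _ (map_mul _), XZGate_map_conj]⟩
  rcases hc with rfl | rfl | rfl | rfl <;> simp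

end Pauli

section Conj

variable {m : Type*}

lemma Matrix.star_map_conj (M : Matrix m m ℂ) : star (M.map conj) = (star M).map conj := by
  ext a b
  simp

lemma Matrix.map_conj_map_conj (M : Matrix m m ℂ) : (M.map conj).map conj = M := by
  ext a b
  simp

lemma Matrix.map_conj_mem_unitaryGroup [Fintype m] [DecidableEq m] {U : Matrix m m ℂ}
    (hU : U ∈ unitaryGroup m ℂ) : U.map conj ∈ unitaryGroup m ℂ := by
  rw [mem_unitaryGroup_iff] at hU ⊢
  rw [star_map_conj, ← Matrix.map_mul, hU, Matrix.map_one _ (map_zero _) (map_one _)]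

lemma Matrix.star_eq_map_conj_of_isDiag {d : Matrix m m ℂ} (hd : d.IsDiag) :
    star d = d.map conj := by
  ext a b
  rcases eq_or_ne a b with rfl | h
  · simp
  · simp [hd h, hd h.symm]

end Conj

section CliffordLevel

variable {n : ℕ}

lemma mem_unitaryGroup_of_mem_cliffordLevel :
    ∀ {k : ℕ} {U : QMat n}, U ∈ CliffordLevel n k → U ∈ unitaryGroup (QV n) ℂ
  | 1, _, hU => PauliGroup.mem_unitaryGroup hU
  | _ + 2, _, hU => hU.1

lemma map_conj_mem_cliffordLevel :
    ∀ {k : ℕ} {U : QMat n}, U ∈ CliffordLevel n k → U.map conj ∈ CliffordLevel n k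
  | 1, _, hU => PauliGroup.map_conj_mem hU
  | _ + 2, U, hU => by
    refine ⟨map_conj_mem_unitaryGroup hU.1, fun P hP => ?_⟩
    have h : U.map conj * P * star (U.map conj) = (U * P.map conj * star U).map conj := by
      rw [Matrix.map_mul, Matrix.map_mul, map_conj_map_conj, star_map_conj]
    rw [h]
    exact map_conj_mem_cliffordLevel (hU.2 _ (PauliGroup.map_conj_mem hP))

lemma star_mem_cliffordLevel_two {φ : QMat n} (hφ : φ ∈ CliffordLevel n 2) :
    star φ ∈ CliffordLevel n 2 := by
  obtain ⟨hu, hconj⟩ := hφ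
  have hcancel (M : QMat n) : star φ * (φ * M * star φ) * φ = M := by
    rw [← mul_assoc, ← mul_assoc, Unitary.star_mul_self_of_mem hu, one_mul, mul_assoc,
      Unitary.star_mul_self_of_mem hu, mul_one]
  refine ⟨Unitary.star_mem hu, fun P hP => ?_⟩
  -- conjugation by `φ` is injective on the finite Pauli group, hence onto it
  have hinj : Set.InjOn (fun Q => φ * Q * star φ) (PauliGroup n) := fun A _ B _ h => by
    simpa [hcancel] using congrArg (fun M => star φ * M * φ) h
  obtain ⟨Q, hQ, rfl⟩ := ((PauliGroup.finite.injOn_iff_bijOn_of_mapsTo hconj).mp hinj).surjOn hP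
  change _ ∈ PauliGroup n
  simpa [hcancel] using hQ

lemma conj_mem_cliffordLevel {φ : QMat n} (hφ : φ ∈ CliffordLevel n 2) :
    ∀ {k : ℕ} {V : QMat n}, V ∈ CliffordLevel n k → φ * V * star φ ∈ CliffordLevel n k
  | 1, _, hV => hφ.2 _ hV
  | _ + 2, V, hV => by
    refine ⟨mul_mem (mul_mem hφ.1 hV.1) (Unitary.star_mem hφ.1), fun P hP => ?_⟩
    have h : φ * V * star φ * P * star (φ * V * star φ)
        = φ * (V * (star φ * P * star (star φ)) * star V) * star φ := by
      simp only [star_mul, star_star, mul_assoc]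
    rw [h]
    exact conj_mem_cliffordLevel hφ (hV.2 _ ((star_mem_cliffordLevel_two hφ).2 P hP))

lemma mul_mem_cliffordLevel_of_left {k : ℕ} {φ W : QMat n} (hφ : φ ∈ CliffordLevel n 2)
    (hW : W ∈ CliffordLevel n (k + 2)) : φ * W ∈ CliffordLevel n (k + 2) := by
  refine ⟨mul_mem hφ.1 hW.1, fun P hP => ?_⟩
  rw [star_mul, show φ * W * P * (star W * star φ) = φ * (W * P * star W) * star φ by
    simp only [mul_assoc]]
  exact conj_mem_cliffordLevel hφ (hW.2 P hP)

lemma mul_mem_cliffordLevel_of_right {k : ℕ} {W φ : QMat n} (hW : W ∈ CliffordLevel n (k + 2))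
    (hφ : φ ∈ CliffordLevel n 2) : W * φ ∈ CliffordLevel n (k + 2) := by
  refine ⟨mul_mem hW.1 hφ.1, fun P hP => ?_⟩
  rw [star_mul, show W * φ * P * (star φ * star W) = W * (φ * P * star φ) * star W by
    simp only [mul_assoc]]
  exact hW.2 _ (hφ.2 P hP)

lemma star_mem_cliffordLevel_of_isSemiClifford {k : ℕ} {U : QMat n} (hsc : IsSemiClifford n U)
    (hU : U ∈ CliffordLevel n (k + 2)) : star U ∈ CliffordLevel n (k + 2) := by
  obtain ⟨φ₁, d, φ₂, h₁, h₂, hd, rfl⟩ := hsc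
  have hd_mem : d ∈ CliffordLevel n (k + 2) := by
    have h : d = star φ₁ * (φ₁ * d * φ₂) * star φ₂ := by
      rw [← mul_assoc, ← mul_assoc, Unitary.star_mul_self_of_mem h₁.1, one_mul, mul_assoc,
        Unitary.mul_star_self_of_mem h₂.1, mul_one]
    rw [h]
    exact mul_mem_cliffordLevel_of_right
      (mul_mem_cliffordLevel_of_left (star_mem_cliffordLevel_two h₁) hU)
      (star_mem_cliffordLevel_two h₂)
  rw [star_mul, star_mul, star_eq_map_conj_of_isDiag hd]
  exact mul_mem_cliffordLevel_of_left (star_mem_cliffordLevel_two h₂)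
    (mul_mem_cliffordLevel_of_right (map_conj_mem_cliffordLevel hd_mem)
      (star_mem_cliffordLevel_two h₁))

end CliffordLevel

theorem stmt11_general (n k : ℕ) (U : QMat n)
    (hsc : IsSemiClifford n U) (hU : U ∈ CliffordLevel n k) :
    U⁻¹ ∈ CliffordLevel n k := by
  rw [Matrix.inv_eq_left_inv
    (mem_unitaryGroup_iff'.mp (mem_unitaryGroup_of_mem_cliffordLevel hU))]
  match k, hU with
  | 1, hU => exact PauliGroup.star_mem hU
  | _ + 2, hU => exact star_mem_cliffordLevel_of_isSemiClifford hsc hU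

/-- For any `k ≥ 1`, the inverse of a semi-Clifford element of `𝒞ₖ`
is in `𝒞ₖ`. -/
theorem stmt11 (n k : ℕ) (hn : 1 ≤ n) (hk : 1 ≤ k) (U : QMat n)
    (hsc : IsSemiClifford n U) (hU : U ∈ CliffordLevel n k) :
    U⁻¹ ∈ CliffordLevel n k :=
  stmt11_general n k U hsc hU
end
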